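/- For n ≥ 3 and any nonzero α ∈ ℍ_ε^⊥ ⊂ A_{n+1}, the set {e₀, ε̃, ε, ẽ₀, α̃, αε, ε̃α, α} consists of pairwise orthogonal nonzero vectors; hence its real linear span 𝕆_α is an 8-dimensional vector subspace of A_{n+1} = ℝ^{2^{n+1}}. -/

import Mathlib

noncomputable section

/-- The Cayley–Dickson algebra `A n` of dimension `2^n` over `ℝ`:
`A 0 = ℝ` and `A (n+1) = A n × A n`. -/
def CD : ℕ → Type
  | 0 => ℝ
  | n + 1 => CD n × CD n

namespace CD

instance instAddCommGroup : (n : ℕ) → AddCommGroup (CD n)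
  | 0 => inferInstanceAs (AddCommGroup ℝ)
  | n + 1 =>
    letI := instAddCommGroup n
    inferInstanceAs (AddCommGroup (CD n × CD n))

instance instModule : (n : ℕ) → Module ℝ (CD n)
  | 0 => inferInstanceAs (Module ℝ ℝ)
  | n + 1 =>
    letI := instAddCommGroup n
    letI := instModule n
    inferInstanceAs (Module ℝ (CD n × CD n))

/-- Conjugation: `x̄ = x` on `ℝ` and `(x₁,x₂)‾ = (x̄₁, -x₂)`. -/
protected def conj : {n : ℕ} → CD n → CD n
  | 0, x => x
  | _ + 1, x => (CD.conj x.1, -x.2)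

/-- Cayley–Dickson multiplication: `(a,b)(x,y) = (ax - ȳb, ya + bx̄)`. -/
protected def mul : {n : ℕ} → CD n → CD n → CD n
  | 0, x, y => (show ℝ from x) * (show ℝ from y)
  | _ + 1, x, y =>
    (CD.mul x.1 y.1 - CD.mul (CD.conj y.2) x.2,
     CD.mul y.2 x.1 + CD.mul x.2 (CD.conj y.1))

instance instMul (n : ℕ) : Mul (CD n) := ⟨CD.mul⟩

/-- The multiplicative unit `e₀` of `A n`. -/
def e0 : (n : ℕ) → CD n
  | 0 => (1 : ℝ)
  | n + 1 => (e0 n, 0)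

/-- The element `ẽ₀ = (0, e₀)` of `A n` (junk value `0` for `n = 0`). -/
def te0 : (n : ℕ) → CD n
  | 0 => 0
  | n + 1 => (0, e0 n)

/-- The "complexification" `α̃ = (-b, a)` of `α = (a,b)` (junk value `0` for `n = 0`);
note `α̃ = α·ẽ₀`. -/
def tilde : {n : ℕ} → CD n → CD n
  | 0, _ => 0
  | _ + 1, x => (-x.2, x.1)

/-- The standard inner product on `A n ≅ ℝ^{2^n}`. -/
protected def inner : {n : ℕ} → CD n → CD n → ℝ
  | 0, x, y => (show ℝ from x) * (show ℝ from y)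
  | _ + 1, x, y => CD.inner x.1 y.1 + CD.inner x.2 y.2

/-- The euclidean norm on `A n`. -/
protected def norm {n : ℕ} (x : CD n) : ℝ := Real.sqrt (CD.inner x x)

/-- `x` is pure if its trace `t(x) = x + x̄` vanishes. -/
def IsPure {n : ℕ} (x : CD n) : Prop := x + CD.conj x = 0

/-- `x = (a,b)` is doubly pure if both `a` and `b` are pure
(equivalently, both `x` and `x̃` are pure). -/
def IsDoublyPure : {n : ℕ} → CD n → Prop
  | 0, x => x = 0
  | _ + 1, x => IsPure x.1 ∧ IsPure x.2

/-- The associator `(x,y,z) = (xy)z - x(yz)`. -/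
def assoc {n : ℕ} (x y z : CD n) : CD n := (x * y) * z - x * (y * z)

/-- The subspace `ℍ_a`: the real span of `{e₀, ã, a, ẽ₀}`. -/
def Ha {n : ℕ} (a : CD n) : Submodule ℝ (CD n) :=
  Submodule.span ℝ {e0 n, tilde a, a, te0 n}

/-- The orthogonal complement `ℍ_a^⊥` of `ℍ_a` in `A n`. -/
def HaPerp {n : ℕ} (a : CD n) : Set (CD n) :=
  {x | ∀ y ∈ Ha a, CD.inner x y = 0}

/-- The element `ε = (ẽ₀, 0)` of `A (n+1)`. -/
def eps (n : ℕ) : CD (n + 1) := (te0 n, 0)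

/-- `α̂ = (b,a)` for `α = (a,b) ∈ A (n+1)`. -/
def hat {n : ℕ} (x : CD (n + 1)) : CD (n + 1) := (x.2, x.1)

/-- The element `(a, b)` of `A (n+1) = A n × A n`. -/
def pair {n : ℕ} (a b : CD n) : CD (n + 1) := (a, b)

end CD

/-- The 8 generating vectors of `𝕆_α ⊆ A (n+1)`. -/
def ovec {n : ℕ} (α : CD (n + 1)) : Fin 8 → CD (n + 1) :=
  ![CD.e0 (n + 1), CD.tilde (CD.eps n), CD.eps n, CD.te0 (n + 1),
    CD.tilde α, α * CD.eps n, CD.tilde (CD.eps n) * α, α]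

/-- The subspace `𝕆_α`: the real span of `{e₀, ε̃, ε, ẽ₀, α̃, αε, ε̃α, α}`. -/
def Oa {n : ℕ} (α : CD (n + 1)) : Submodule ℝ (CD (n + 1)) :=
  Submodule.span ℝ (Set.range (ovec α))

/-! Write `α = (a, b)`. Orthogonality of `α` to `e₀, ẽ₀, ε, ε̃` says exactly that `a` and `b` are
doubly pure, and for doubly pure `a, b` one computes `αε = (ã, -b̃)` and `ε̃α = (b̃, ã)`. So the
eight vectors are explicit pairs: the first four have components in `span {e₀, ẽ₀}`, the last four
in `Ã_n`. Orthogonality then comes down to `e₀ ⊥ ẽ₀`, `Ã_n ⊥ {e₀, ẽ₀}`, and the skew-adjointness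
`⟨x̃, y⟩ = -⟨x, ỹ⟩` of `x ↦ x̃`. Nonzero pairwise orthogonal vectors are linearly independent,
which gives the dimension 8. -/

namespace CD

variable {n : ℕ}

theorem inner_comm : ∀ {n : ℕ} (x y : CD n), CD.inner x y = CD.inner y x
  | 0, x, y => mul_comm (show ℝ from x) y
  | _ + 1, x, y => congrArg₂ (· + ·) (inner_comm x.1 y.1) (inner_comm x.2 y.2)

theorem inner_add_left : ∀ {n : ℕ} (x y z : CD n),
    CD.inner (x + y) z = CD.inner x z + CD.inner y z
  | 0, x, y, z => add_mul (show ℝ from x) y z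
  | _ + 1, x, y, z => by
    show CD.inner (x.1 + y.1) z.1 + CD.inner (x.2 + y.2) z.2 = _
    rw [inner_add_left, inner_add_left]
    exact add_add_add_comm _ _ _ _

theorem inner_smul_left : ∀ {n : ℕ} (c : ℝ) (x y : CD n),
    CD.inner (c • x) y = c * CD.inner x y
  | 0, c, x, y => mul_assoc c (show ℝ from x) y
  | _ + 1, c, x, y => by
    show CD.inner (c • x.1) y.1 + CD.inner (c • x.2) y.2 = _
    rw [inner_smul_left, inner_smul_left]
    exact (mul_add _ _ _).symm

def innerₗ (y : CD n) : CD n →ₗ[ℝ] ℝ where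
  toFun x := CD.inner x y
  map_add' x z := inner_add_left x z y
  map_smul' c x := inner_smul_left c x y

@[simp] theorem innerₗ_apply (x y : CD n) : innerₗ y x = CD.inner x y := rfl

@[simp] theorem inner_zero_left (y : CD n) : CD.inner 0 y = 0 := (innerₗ y).map_zero

@[simp] theorem inner_zero_right (x : CD n) : CD.inner x 0 = 0 := by
  rw [inner_comm, inner_zero_left]

@[simp] theorem inner_neg_left (x y : CD n) : CD.inner (-x) y = -CD.inner x y :=
  (innerₗ y).map_neg x

@[simp] theorem inner_neg_right (x y : CD n) : CD.inner x (-y) = -CD.inner x y := by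
  rw [inner_comm, inner_neg_left, inner_comm]

@[simp] theorem inner_pair (a b c d : CD n) :
    CD.inner (pair a b) (pair c d) = CD.inner a c + CD.inner b d := rfl

theorem inner_self_nonneg : ∀ {n : ℕ} (x : CD n), 0 ≤ CD.inner x x
  | 0, x => mul_self_nonneg (show ℝ from x)
  | _ + 1, x => add_nonneg (inner_self_nonneg x.1) (inner_self_nonneg x.2)

theorem eq_zero_of_inner_self_eq_zero : ∀ {n : ℕ} {x : CD n}, CD.inner x x = 0 → x = 0
  | 0, _, h => mul_self_eq_zero.mp h
  | _ + 1, x, h => by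
    obtain ⟨h₁, h₂⟩ :=
      (add_eq_zero_iff_of_nonneg (inner_self_nonneg x.1) (inner_self_nonneg x.2)).mp h
    exact Prod.ext (eq_zero_of_inner_self_eq_zero h₁) (eq_zero_of_inner_self_eq_zero h₂)

theorem linearIndependent_of_inner_eq_zero {ι : Type*} [Fintype ι] {v : ι → CD n}
    (hv : ∀ i, v i ≠ 0) (horth : ∀ i j, i ≠ j → CD.inner (v i) (v j) = 0) :
    LinearIndependent ℝ v := by
  rw [Fintype.linearIndependent_iff]
  intro g hg i
  have hgi : g i * CD.inner (v i) (v i) = 0 :=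
    calc g i * CD.inner (v i) (v i) = innerₗ (v i) (∑ j, g j • v j) := by
          rw [map_sum, Finset.sum_eq_single i (fun j _ hji => by
            rw [map_smul, innerₗ_apply, horth j i hji, smul_zero])
            (fun hi => absurd (Finset.mem_univ i) hi), map_smul, innerₗ_apply, smul_eq_mul]
      _ = 0 := by rw [hg, map_zero]
  exact (mul_eq_zero.mp hgi).resolve_right fun h => hv i (eq_zero_of_inner_self_eq_zero h)

theorem pair_eq_zero_iff {a b : CD n} : pair a b = 0 ↔ a = 0 ∧ b = 0 := Prod.mk_eq_zero

theorem e0_ne_zero : ∀ {n : ℕ}, e0 n ≠ 0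
  | 0 => one_ne_zero (α := ℝ)
  | _ + 1 => fun h => e0_ne_zero (pair_eq_zero_iff.mp h).1

theorem te0_ne_zero : te0 (n + 1) ≠ 0 := fun h => e0_ne_zero (pair_eq_zero_iff.mp h).2

theorem inner_e0_te0 : CD.inner (e0 (n + 1)) (te0 (n + 1)) = 0 :=
  (inner_pair (e0 n) 0 0 (e0 n)).trans (by simp)

theorem inner_te0_e0 : CD.inner (te0 (n + 1)) (e0 (n + 1)) = 0 := by
  rw [inner_comm, inner_e0_te0]

theorem conj_zero : ∀ {n : ℕ}, CD.conj (0 : CD n) = 0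
  | 0 => rfl
  | _ + 1 => Prod.ext conj_zero neg_zero

theorem conj_neg : ∀ {n : ℕ} (x : CD n), CD.conj (-x) = -CD.conj x
  | 0, _ => rfl
  | _ + 1, x => Prod.ext (conj_neg x.1) rfl

theorem conj_e0 : ∀ {n : ℕ}, CD.conj (e0 n) = e0 n
  | 0 => rfl
  | _ + 1 => Prod.ext conj_e0 neg_zero

theorem conj_te0 : CD.conj (te0 (n + 1)) = -te0 (n + 1) :=
  Prod.ext (conj_zero.trans neg_zero.symm) rfl

mutual

protected theorem zero_mul : ∀ {n : ℕ} (x : CD n), 0 * x = 0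
  | 0, x => zero_mul (show ℝ from x)
  | _ + 1, x => by
    show pair (0 * x.1 - CD.conj x.2 * 0) (x.2 * 0 + 0 * CD.conj x.1) = 0
    rw [CD.zero_mul, CD.mul_zero, CD.mul_zero, CD.zero_mul, sub_zero, add_zero]
    rfl

protected theorem mul_zero : ∀ {n : ℕ} (x : CD n), x * 0 = 0
  | 0, x => mul_zero (show ℝ from x)
  | _ + 1, x => by
    show pair (x.1 * 0 - CD.conj 0 * x.2) (0 * x.1 + x.2 * CD.conj 0) = 0
    rw [conj_zero, CD.zero_mul, CD.mul_zero, CD.zero_mul, CD.mul_zero, sub_zero, add_zero]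
    rfl

end

mutual

protected theorem neg_mul : ∀ {n : ℕ} (x y : CD n), -x * y = -(x * y)
  | 0, x, y => neg_mul (show ℝ from x) y
  | _ + 1, x, y => by
    show pair (-x.1 * y.1 - CD.conj y.2 * -x.2) (y.2 * -x.1 + -x.2 * CD.conj y.1)
      = pair (-(x.1 * y.1 - CD.conj y.2 * x.2)) (-(y.2 * x.1 + x.2 * CD.conj y.1))
    rw [CD.neg_mul, CD.mul_neg, CD.mul_neg, CD.neg_mul]
    congr 1 <;> abel

protected theorem mul_neg : ∀ {n : ℕ} (x y : CD n), x * -y = -(x * y)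
  | 0, x, y => mul_neg (show ℝ from x) y
  | _ + 1, x, y => by
    show pair (x.1 * -y.1 - CD.conj (-y.2) * x.2) (-y.2 * x.1 + x.2 * CD.conj (-y.1))
      = pair (-(x.1 * y.1 - CD.conj y.2 * x.2)) (-(y.2 * x.1 + x.2 * CD.conj y.1))
    rw [conj_neg, conj_neg, CD.mul_neg, CD.neg_mul, CD.neg_mul, CD.mul_neg]
    congr 1 <;> abel

end

protected theorem mul_e0 : ∀ {n : ℕ} (x : CD n), x * e0 n = x
  | 0, x => mul_one (show ℝ from x)
  | _ + 1, x => by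
    show pair (x.1 * e0 _ - CD.conj 0 * x.2) (0 * x.1 + x.2 * CD.conj (e0 _)) = x
    rw [conj_zero, conj_e0, CD.mul_e0, CD.mul_e0, CD.zero_mul, CD.zero_mul, sub_zero, zero_add]
    rfl

protected theorem e0_mul : ∀ {n : ℕ} (x : CD n), e0 n * x = x
  | 0, x => one_mul (show ℝ from x)
  | _ + 1, x => by
    show pair (e0 _ * x.1 - CD.conj x.2 * 0) (x.2 * e0 _ + 0 * CD.conj x.1) = x
    rw [CD.e0_mul, CD.mul_e0, CD.mul_zero, CD.zero_mul, sub_zero, add_zero]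
    rfl

theorem mul_te0 (x : CD (n + 1)) : x * te0 (n + 1) = tilde x := by
  show pair (x.1 * 0 - CD.conj (e0 n) * x.2) (e0 n * x.1 + x.2 * CD.conj 0) = pair (-x.2) x.1
  rw [conj_e0, conj_zero, CD.mul_zero, CD.mul_zero, CD.e0_mul, CD.e0_mul, zero_sub, add_zero]

theorem tilde_eq_zero_iff {x : CD (n + 1)} : tilde x = 0 ↔ x = 0 := by
  rw [show tilde x = pair (-x.2) x.1 from rfl, pair_eq_zero_iff, neg_eq_zero, and_comm]
  exact pair_eq_zero_iff.symm

theorem tilde_tilde (x : CD (n + 1)) : tilde (tilde x) = -x := rfl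

theorem inner_tilde_left (x y : CD (n + 1)) :
    CD.inner (tilde x) y = -CD.inner x (tilde y) := by
  show CD.inner (-x.2) y.1 + CD.inner x.1 y.2 = -(CD.inner x.1 (-y.2) + CD.inner x.2 y.1)
  rw [inner_neg_left, inner_neg_right, inner_comm x.2]
  ring

@[simp] theorem inner_self_tilde (x : CD (n + 1)) : CD.inner x (tilde x) = 0 := by
  have h := inner_tilde_left x x
  rw [inner_comm] at h
  linarith

theorem isPure_iff_inner_e0 : ∀ {n : ℕ} (x : CD n), IsPure x ↔ CD.inner x (e0 n) = 0
  | 0, x => by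
    show (show ℝ from x) + (show ℝ from x) = 0 ↔ (show ℝ from x) * 1 = 0
    constructor <;> intro h <;> linarith
  | _ + 1, x => by
    show pair (x.1 + CD.conj x.1) (x.2 + -x.2) = 0 ↔ CD.inner x.1 (e0 _) + CD.inner x.2 0 = 0
    rw [pair_eq_zero_iff, add_neg_cancel, inner_zero_right, add_zero]
    exact (and_iff_left rfl).trans (isPure_iff_inner_e0 x.1)

theorem IsPure.conj_eq_neg {x : CD n} (hx : IsPure x) : CD.conj x = -x :=
  eq_neg_of_add_eq_zero_right hx

theorem IsPure.neg {x : CD n} (hx : IsPure x) : IsPure (-x) := by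
  rw [IsPure, conj_neg, ← neg_add, hx, neg_zero]

theorem isDoublyPure_iff_inner {x : CD (n + 1)} :
    IsDoublyPure x ↔ CD.inner x (e0 (n + 1)) = 0 ∧ CD.inner x (te0 (n + 1)) = 0 := by
  show IsPure x.1 ∧ IsPure x.2 ↔
    CD.inner x.1 (e0 n) + CD.inner x.2 0 = 0 ∧ CD.inner x.1 0 + CD.inner x.2 (e0 n) = 0
  rw [isPure_iff_inner_e0, isPure_iff_inner_e0, inner_zero_right, inner_zero_right, add_zero,
    zero_add]

theorem IsDoublyPure.isPure {x : CD (n + 1)} (hx : IsDoublyPure x) : IsPure x :=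
  (isPure_iff_inner_e0 x).2 (isDoublyPure_iff_inner.1 hx).1

theorem IsDoublyPure.tilde {x : CD (n + 1)} (hx : IsDoublyPure x) : IsDoublyPure (tilde x) :=
  ⟨hx.2.neg, hx.1⟩

@[simp] theorem IsDoublyPure.inner_e0_left {x : CD (n + 1)} (hx : IsDoublyPure x) :
    CD.inner (e0 (n + 1)) x = 0 := by
  rw [inner_comm]; exact (isDoublyPure_iff_inner.1 hx).1

@[simp] theorem IsDoublyPure.inner_te0_left {x : CD (n + 1)} (hx : IsDoublyPure x) :
    CD.inner (te0 (n + 1)) x = 0 := by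
  rw [inner_comm]; exact (isDoublyPure_iff_inner.1 hx).2

theorem te0_mul_of_isDoublyPure {x : CD (n + 1)} (hx : IsDoublyPure x) :
    te0 (n + 1) * x = -tilde x := by
  show pair (0 * x.1 - CD.conj x.2 * e0 n) (x.2 * 0 + e0 n * CD.conj x.1) = pair (-(-x.2)) (-x.1)
  rw [CD.zero_mul, CD.mul_zero, CD.mul_e0, CD.e0_mul, hx.1.conj_eq_neg, hx.2.conj_eq_neg,
    zero_sub, zero_add]

theorem pair_mul_eps (a b : CD (n + 1)) : pair a b * eps (n + 1) = pair (tilde a) (-tilde b) := by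
  show pair (a * te0 _ - CD.conj 0 * b) (0 * a + b * CD.conj (te0 _)) = _
  rw [conj_zero, conj_te0, CD.zero_mul, CD.zero_mul, CD.mul_neg, mul_te0, mul_te0, sub_zero,
    zero_add]

theorem tilde_eps_mul_pair {a b : CD (n + 1)} (ha : IsDoublyPure a) (hb : IsPure b) :
    tilde (eps (n + 1)) * pair a b = pair (tilde b) (tilde a) := by
  show pair (-0 * a - CD.conj b * te0 _) (b * -0 + te0 _ * CD.conj a) = _
  rw [neg_zero, CD.zero_mul, CD.mul_zero, hb.conj_eq_neg, ha.isPure.conj_eq_neg, CD.neg_mul,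
    CD.mul_neg, mul_te0, te0_mul_of_isDoublyPure ha, zero_sub, zero_add, neg_neg, neg_neg]

theorem isDoublyPure_of_pair_mem_HaPerp_eps {a b : CD (n + 1)}
    (h : pair a b ∈ HaPerp (eps (n + 1))) : IsDoublyPure a ∧ IsDoublyPure b := by
  have hgen : ∀ y ∈ ({e0 (n + 2), tilde (eps (n + 1)), eps (n + 1), te0 (n + 2)} : Set _),
      CD.inner (pair a b) y = 0 :=
    fun y hy => h y (Submodule.subset_span hy)
  have h₁ : CD.inner a (e0 (n + 1)) + CD.inner b 0 = 0 := hgen (e0 (n + 2)) (by simp)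
  have h₂ : CD.inner a (-0) + CD.inner b (te0 (n + 1)) = 0 := hgen (tilde (eps (n + 1))) (by simp)
  have h₃ : CD.inner a (te0 (n + 1)) + CD.inner b 0 = 0 := hgen (eps (n + 1)) (by simp)
  have h₄ : CD.inner a 0 + CD.inner b (e0 (n + 1)) = 0 := hgen (te0 (n + 2)) (by simp)
  simp only [neg_zero, inner_zero_right, add_zero, zero_add] at h₁ h₂ h₃ h₄
  exact ⟨isDoublyPure_iff_inner.2 ⟨h₁, h₃⟩, isDoublyPure_iff_inner.2 ⟨h₄, h₂⟩⟩

-- `ε̃ = (-0, ẽ₀)` is kept in the form `tilde` produces, so that the equation holds by `rfl`.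
theorem ovec_pair {a b : CD (n + 1)} (ha : IsDoublyPure a) (hb : IsDoublyPure b) :
    ovec (pair a b) = ![pair (e0 (n + 1)) 0, pair (-0) (te0 (n + 1)), pair (te0 (n + 1)) 0,
      pair 0 (e0 (n + 1)), pair (-b) a, pair (tilde a) (-tilde b), pair (tilde b) (tilde a),
      pair a b] := by
  rw [ovec, pair_mul_eps, tilde_eps_mul_pair ha hb.isPure]
  rfl

theorem ovec_pair_ne_zero {a b : CD (n + 1)} (ha : IsDoublyPure a) (hb : IsDoublyPure b)
    (h0 : pair a b ≠ 0) (i : Fin 8) : ovec (pair a b) i ≠ 0 := by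
  rw [Ne, pair_eq_zero_iff] at h0
  rw [ovec_pair ha hb]
  fin_cases i <;> simp [pair_eq_zero_iff, e0_ne_zero, te0_ne_zero, tilde_eq_zero_iff] <;> tauto

theorem inner_ovec_pair_eq_zero {a b : CD (n + 1)} (ha : IsDoublyPure a) (hb : IsDoublyPure b)
    (i j : Fin 8) (hij : i ≠ j) : CD.inner (ovec (pair a b) i) (ovec (pair a b) j) = 0 := by
  wlog hlt : i < j generalizing i j
  · rw [inner_comm]
    exact this j i hij.symm (hij.lt_or_gt.resolve_left hlt)
  have hab := inner_comm a b
  have hskew : CD.inner b (tilde a) = -CD.inner a (tilde b) := by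
    rw [inner_comm, inner_tilde_left]
  rw [ovec_pair ha hb]
  fin_cases i <;> fin_cases j <;>
    simp [ha, hb, ha.tilde, hb.tilde, inner_e0_te0, inner_te0_e0, inner_tilde_left, tilde_tilde]
      at hlt ⊢ <;> linarith

end CD

/-- For `n ≥ 3` and nonzero `α ∈ ℍ_ε^⊥ ⊆ A (n+1)`, the vectors
`e₀, ε̃, ε, ẽ₀, α̃, αε, ε̃α, α` are nonzero and pairwise orthogonal; hence their
span `𝕆_α` is an 8-dimensional subspace of `A (n+1) = ℝ^{2^{n+1}}`. -/
theorem statement11 (n : ℕ) (hn : 3 ≤ n) (α : CD (n + 1))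
    (hα : α ∈ CD.HaPerp (CD.eps n)) (h0 : α ≠ 0) :
    (∀ i, ovec α i ≠ 0) ∧
    (∀ i j, i ≠ j → CD.inner (ovec α i) (ovec α j) = 0) ∧
    Module.finrank ℝ (Oa α) = 8 := by
  obtain ⟨m, rfl⟩ : ∃ m, n = m + 1 := ⟨n - 1, by omega⟩
  obtain ⟨a, b, rfl⟩ : ∃ a b : CD (m + 1), α = CD.pair a b := ⟨α.1, α.2, rfl⟩
  obtain ⟨ha, hb⟩ := CD.isDoublyPure_of_pair_mem_HaPerp_eps hα
  have hne := CD.ovec_pair_ne_zero ha hb h0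
  have horth := CD.inner_ovec_pair_eq_zero ha hb
  refine ⟨hne, horth, ?_⟩
  rw [Oa, finrank_span_eq_card (CD.linearIndependent_of_inner_eq_zero hne horth), Fintype.card_fin]
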